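/- arXiv:1906.07943 — 2 statements merged into one kernel-verified Lean document; each statement's English description precedes it below -/
import Mathlib

section
/- If u ∈ L^p(ℝ^N) (1 ≤ p < ∞, N ≥ 2) is a radial, radially non-increasing function (0 ≤ u(x) ≤ u(y) whenever |x| ≥ |y|), then |u(x)| ≤ |x|^(-N/p) · (N/ω_{N-1})^{1/p} · ‖u‖_{L^p(ℝ^N)} for every x ≠ 0, where ω_{N-1} is the (N-1)-dimensional measure of the unit (N-1)-sphere. -/
/-!
On the closed ball of radius `‖x‖` a radially non-increasing `u ≥ 0` is at least `u x`, so
`u(x)^p · |B_{‖x‖}| ≤ ∫ u^p`; scaling gives `|B_r| = r^N |B_1|`, and `N |B_1| = ω_{N-1}`.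
-/

open Real MeasureTheory Metric

theorem mul_measureReal_closedBall_norm_le_integral {E : Type*} [NormedAddCommGroup E]
    [MeasurableSpace E] [OpensMeasurableSpace E] [ProperSpace E] {μ : Measure E}
    [IsFiniteMeasureOnCompacts μ] {g : E → ℝ} (hg : Integrable g μ) (hg_nonneg : 0 ≤ g)
    (hg_anti : ∀ x y : E, ‖y‖ ≤ ‖x‖ → g x ≤ g y) (x : E) :
    g x * μ.real (closedBall 0 ‖x‖) ≤ ∫ y, g y ∂μ :=
  calc g x * μ.real (closedBall 0 ‖x‖)
      ≤ ∫ y in closedBall 0 ‖x‖, g y ∂μ :=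
        setIntegral_ge_of_const_le_real measurableSet_closedBall measure_closedBall_lt_top.ne
          (fun y hy => hg_anti x y (mem_closedBall_zero_iff.mp hy)) hg.integrableOn
    _ ≤ ∫ y, g y ∂μ := setIntegral_le_integral hg (.of_forall hg_nonneg)

theorem le_div_rpow_one_div_of_rpow_mul_le {a c I p : ℝ} (ha : 0 ≤ a) (hc : 0 < c)
    (hp : 0 < p) (h : a ^ p * c ≤ I) : a ≤ (I / c) ^ (1 / p) := by
  have hI : 0 ≤ I := (by positivity : 0 ≤ a ^ p * c).trans h
  rw [one_div, le_rpow_inv_iff_of_pos ha (div_nonneg hI hc.le) hp]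
  exact (le_div_iff₀ hc).mpr h

theorem stmt_4 (N : ℕ) (hN : 2 ≤ N) (p : ℝ) (hp : 1 ≤ p)
    (u : EuclideanSpace ℝ (Fin N) → ℝ)
    (hnn : ∀ x, 0 ≤ u x)
    (hrad : ∀ x y : EuclideanSpace ℝ (Fin N), ‖y‖ ≤ ‖x‖ → u x ≤ u y)
    (hint : Integrable (fun x => u x ^ p)) :
    ∀ x : EuclideanSpace ℝ (Fin N), x ≠ 0 →
      |u x| ≤ ‖x‖ ^ (-(N : ℝ) / p) *
        ((N : ℝ) /
          ((N : ℝ) * (volume (Metric.ball (0 : EuclideanSpace ℝ (Fin N)) 1)).toReal)) ^ (1 / p) *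
        (∫ y, u y ^ p) ^ (1 / p) := by
  intro x hx
  rw [← measureReal_def, div_mul_cancel_left₀ (by norm_cast; omega)]
  set ω := volume.real (ball (0 : EuclideanSpace ℝ (Fin N)) 1)
  have hp0 : 0 < p := by linarith
  have hr : 0 < ‖x‖ := norm_pos_iff.mpr hx
  have hω : 0 < ω := ENNReal.toReal_pos (measure_ball_pos _ _ one_pos).ne' measure_ball_lt_top.ne
  have hI : 0 ≤ ∫ y, u y ^ p := integral_nonneg fun y => rpow_nonneg (hnn y) p
  have hmass := mul_measureReal_closedBall_norm_le_integral hint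
    (fun y => rpow_nonneg (hnn y) p) (fun x y h => rpow_le_rpow (hnn x) (hrad x y h) hp0.le) x
  rw [Measure.addHaar_real_closedBall _ _ hr.le, finrank_euclideanSpace_fin] at hmass
  calc |u x| = u x := abs_of_nonneg (hnn x)
    _ ≤ ((∫ y, u y ^ p) / (‖x‖ ^ N * ω)) ^ (1 / p) :=
        le_div_rpow_one_div_of_rpow_mul_le (hnn x) (by positivity) hp0 hmass
    _ = _ := by
        rw [div_rpow hI (by positivity), mul_rpow (by positivity) hω.le, ← rpow_natCast,
          ← rpow_mul hr.le, inv_rpow hω.le, neg_div, rpow_neg hr.le, mul_one_div]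
        field_simp
end

section
/- Let a, b, c, d be real numbers with a⁻ = max(-a,0) denoting negative part, and q ≥ 2. For a measurable function u : ℝ^N → ℝ, writing u⁺ = max(u,0) and u⁻ = max(-u,0), one has for a.e. x, y: |u(x)-u(y)|^{q-2}(u(x)-u(y))·(-u⁻(x)+u⁻(y)) ≥ |u⁻(x)-u⁻(y)|^q. -/
open Real

private lemma key_ineq (q : ℝ) (hq : 2 ≤ q) (a b : ℝ) :
    |max (-a) 0 - max (-b) 0| ^ q ≤
      |a - b| ^ (q - 2) * (a - b) * (-(max (-a) 0) + max (-b) 0) := by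
  have hq0 : q ≠ 0 := by linarith
  have hq1 : (0:ℝ) ≤ q - 1 := by linarith
  rcases le_or_gt 0 a with ha | ha <;> rcases le_or_gt 0 b with hb | hb
  · -- both nonneg
    rw [max_eq_right (neg_nonpos.mpr ha), max_eq_right (neg_nonpos.mpr hb)]
    simp [Real.zero_rpow hq0]
  · -- a ≥ 0, b < 0
    rw [max_eq_right (neg_nonpos.mpr ha), max_eq_left (le_of_lt (neg_pos.mpr hb))]
    have hab : 0 < a - b := by linarith
    have hnb : 0 < -b := by linarith
    rw [abs_of_pos hab]
    have h1 : (a - b) ^ (q - 2) * (a - b) = (a - b) ^ (q - 1) := by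
      rw [show q - 1 = (q - 2) + 1 by ring, Real.rpow_add_one (ne_of_gt hab)]
    have h2 : |0 - -b| ^ q = (-b) ^ (q - 1) * (-b) := by
      rw [show |0 - -b| = -b by rw [zero_sub, neg_neg, abs_of_neg hb],
        ← Real.rpow_add_one (ne_of_gt hnb), sub_add_cancel]
    rw [h2, h1, neg_zero, zero_add]
    exact mul_le_mul_of_nonneg_right
      (Real.rpow_le_rpow (le_of_lt hnb) (by linarith) hq1) (le_of_lt hnb)
  · -- a < 0, b ≥ 0
    rw [max_eq_left (le_of_lt (neg_pos.mpr ha)), max_eq_right (neg_nonpos.mpr hb)]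
    have hab : 0 < b - a := by linarith
    have hna : 0 < -a := by linarith
    rw [show |a - b| = b - a by rw [abs_of_neg (by linarith)]; ring]
    have h1 : (b - a) ^ (q - 2) * (a - b) * (-(-a) + 0) = (b - a) ^ (q - 1) * (-a) := by
      rw [show q - 1 = (q - 2) + 1 by ring, Real.rpow_add_one (ne_of_gt hab)]
      ring
    have h2 : |-a - 0| ^ q = (-a) ^ (q - 1) * (-a) := by
      rw [show |-a - 0| = -a by rw [sub_zero, abs_of_pos hna],
        ← Real.rpow_add_one (ne_of_gt hna), sub_add_cancel]
    rw [h2, h1]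
    exact mul_le_mul_of_nonneg_right
      (Real.rpow_le_rpow (le_of_lt hna) (by linarith) hq1) (le_of_lt hna)
  · -- both neg
    rw [max_eq_left (le_of_lt (neg_pos.mpr ha)), max_eq_left (le_of_lt (neg_pos.mpr hb))]
    rcases eq_or_ne a b with rfl | hne
    · simp [Real.zero_rpow hq0]
    · have habs : 0 < |a - b| := abs_pos.mpr (sub_ne_zero.mpr hne)
      have h1 : |-a - -b| = |a - b| := by rw [abs_sub_comm]; congr 1; ring
      have h2 : -(-a) + -b = a - b := by ring
      rw [h1, h2,
        show |a - b| ^ (q - 2) * (a - b) * (a - b) = |a - b| ^ (q - 2) * (a - b) ^ (2:ℕ) by ring,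
        show (a - b) ^ (2:ℕ) = |a - b| ^ (2:ℕ) by rw [sq_abs],
        show |a - b| ^ (2:ℕ) = |a - b| ^ ((2:ℕ):ℝ) by rw [Real.rpow_natCast],
        ← Real.rpow_add habs]
      norm_num

theorem stmt_8 (N : ℕ) (hN : 2 ≤ N) (q : ℝ) (hq : 2 ≤ q)
    (u : EuclideanSpace ℝ (Fin N) → ℝ) :
    ∀ x y : EuclideanSpace ℝ (Fin N),
      |max (-u x) 0 - max (-u y) 0| ^ q ≤
        |u x - u y| ^ (q - 2) * (u x - u y) * (-(max (-u x) 0) + max (-u y) 0) := by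
  intro x y
  exact key_ineq q hq (u x) (u y)
end
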